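/- arXiv:1905.11981 — 4 statements merged into one kernel-verified Lean document; each statement's English description precedes it below -/
import Mathlib

section
/- Let m ∈ ℕ with m ≥ 1, let r ∈ ℕ₀, and let A ⊆ ℕ₀ be an IP_r^+ set all of whose sidelengths n₁,…,n_r are coprime to m. Then the set of residues A mod m has cardinality at least min(m, r+1). -/
/-!
Modulo `m` the residues of the `IP_r^+` set form the sumset `n₀ + {0, n₁} + ⋯ + {0, n_r}`.
Adding `{0, u}` to a set `X ⊆ ℤ/mℤ` either enlarges `X` or leaves it invariant under
translation by `u`; in the latter case `X` is everything, because a unit `u` generates `ℤ/mℤ`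
additively. So each sidelength adds a new residue until all `m` residues are reached.
-/

open scoped BigOperators

namespace MultAuto

/-- Base-`k` value of a word over `Σ_k` (most significant digit first); `[ε]_k = 0`. -/
def valk (k : ℕ) (u : List ℕ) : ℕ := u.foldl (fun acc d => k * acc + d) 0

/-- `u` is a word over the alphabet `Σ_k = {0,…,k-1}`. -/
def IsWord (k : ℕ) (u : List ℕ) : Prop := ∀ d ∈ u, d < k

/-- `u` has no leading zeros (the empty word qualifies). -/
def NoLeadZero : List ℕ → Prop
  | [] => True
  | d :: _ => d ≠ 0

/-- `wpow v l` is the `l`-fold concatenation `v^l`. -/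
def wpow (v : List ℕ) (l : ℕ) : List ℕ := (List.replicate l v).flatten

/-- Transition function of a word: `δ_{uv} = δ_u ∘ δ_v`. -/
def deltaW {S : Type*} (δ : ℕ → S → S) : List ℕ → S → S
  | [] => id
  | d :: t => δ d ∘ deltaW δ t

/-- `a : ℕ → ℂ` is a `k`-automatic sequence. -/
def IsAutomatic (k : ℕ) (a : ℕ → ℂ) : Prop :=
  ∃ (S : Type) (_ : Fintype S) (s₀ : S) (δ : ℕ → S → S) (τ : S → ℂ),
    ∀ u : List ℕ, IsWord k u → NoLeadZero u → a (valk k u) = τ (deltaW δ u s₀)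

/-- `a` is multiplicative: `a (m n) = a m * a n` for coprime positive `m, n`. -/
def IsMult (a : ℕ → ℂ) : Prop :=
  ∀ m n : ℕ, 0 < m → 0 < n → Nat.Coprime m n → a (m * n) = a m * a n

/-- The word `u_r v_r^{l_r} u_{r-1} ⋯ u_1 v_1^{l_1} u_0`. -/
def aridWord (u v : ℕ → List ℕ) (l : ℕ → ℕ) : ℕ → List ℕ
  | 0 => u 0
  | r + 1 => u (r + 1) ++ wpow (v (r + 1)) (l (r + 1)) ++ aridWord u v l r

/-- `A` is a basic arid set of rank ≤ r in base k. -/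
def BasicArid (k r : ℕ) (A : Set ℕ) : Prop :=
  ∃ u v : ℕ → List ℕ, (∀ i, IsWord k (u i)) ∧ (∀ i, IsWord k (v i)) ∧
    A = {n | ∃ l : ℕ → ℕ, n = valk k (aridWord u v l r)}

/-- `A` is an arid set of rank ≤ r: a finite union of basic arid sets of rank ≤ r. -/
def AridOfRank (k r : ℕ) (A : Set ℕ) : Prop :=
  ∃ (m : ℕ) (B : Fin m → Set ℕ), (∀ j, BasicArid k r (B j)) ∧ A = ⋃ j, B j

/-- `A` is arid (in base `k`). -/
def Arid (k : ℕ) (A : Set ℕ) : Prop := ∃ r, AridOfRank k r A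

/-- `χ : ℕ → ℂ` is a Dirichlet character of modulus `m`: completely multiplicative,
`m`-periodic, and nonvanishing exactly at integers coprime to `m`. -/
def IsDirichletLike (m : ℕ) (χ : ℕ → ℂ) : Prop :=
  0 < m ∧ (∀ a b : ℕ, 0 < a → 0 < b → χ (a * b) = χ a * χ b) ∧
  (∀ n : ℕ, 0 < n → χ (n + m) = χ n) ∧
  (∀ n : ℕ, 0 < n → (χ n ≠ 0 ↔ Nat.Coprime n m))

/-- `(n)_k^l`: the last `l` base-`k` digits of `n`, padded with leading zeros,
most significant digit first. -/
def padk (k l n : ℕ) : List ℕ := (List.range l).reverse.map fun i => n / k ^ i % k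

/-- The equivalence `n₁ ∼ n₂` on `ℕ` induced by the transition maps `δ`. -/
def EqvN (k : ℕ) {S : Type*} (δ : ℕ → S → S) (n₁ n₂ : ℕ) : Prop :=
  ∃ l₀ : ℕ, ∀ l ≥ l₀, deltaW δ (padk k l n₁) = deltaW δ (padk k l n₂)

/-- `E ⊆ ℕ` has upper Banach density zero. -/
def UpperBanachDensityZero (E : Set ℕ) : Prop :=
  ∀ ε : ℝ, 0 < ε → ∃ N₀ : ℕ, ∀ N ≥ N₀, ∀ M : ℕ,
    ((E ∩ Set.Ico M (M + N)).ncard : ℝ) ≤ ε * N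

end MultAuto

section SubsetSums

variable {G : Type*} [AddCommGroup G]

theorem Finset.eq_univ_of_add_mem [Fintype G] {S : Finset G} {u : G}
    (hu : AddSubgroup.zmultiples u = ⊤) (hS : S.Nonempty) (hadd : ∀ x ∈ S, x + u ∈ S) :
    S = Finset.univ := by
  obtain ⟨y, hy⟩ := hS
  have hmul : ∀ k : ℕ, y + k • u ∈ S := by
    intro k
    induction k with
    | zero => simpa using hy
    | succ k ih => simpa [succ_nsmul, add_assoc] using hadd _ ih
  refine Finset.eq_univ_of_forall fun x => ?_
  obtain ⟨k, hk⟩ : x - y ∈ AddSubmonoid.multiples u := by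
    rw [mem_multiples_iff_mem_zmultiples, hu]; trivial
  simpa [hk] using hmul k

theorem Finset.min_card_succ_le_card_union_image_add [Fintype G] [DecidableEq G]
    {S : Finset G} {u : G} (hu : AddSubgroup.zmultiples u = ⊤) (hS : S.Nonempty) :
    min (Fintype.card G) (S.card + 1) ≤ (S ∪ S.image (· + u)).card := by
  by_cases hadd : ∀ x ∈ S, x + u ∈ S
  · rw [Finset.eq_univ_of_add_mem hu hS hadd]
    exact (min_le_left _ _).trans (Finset.card_le_card Finset.subset_union_left)
  · push Not at hadd
    obtain ⟨x, hx, hxu⟩ := hadd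
    calc min (Fintype.card G) (S.card + 1) ≤ (insert (x + u) S).card := by
          rw [Finset.card_insert_of_notMem hxu]; exact min_le_right _ _
      _ ≤ (S ∪ S.image (· + u)).card :=
          Finset.card_le_card <| Finset.insert_subset
            (Finset.mem_union_right _ (Finset.mem_image_of_mem _ hx)) Finset.subset_union_left

theorem Finset.image_powerset_insert_add_sum [DecidableEq G] {ι : Type*} [DecidableEq ι]
    {s : Finset ι} {a : ι} (ha : a ∉ s) (c : G) (n : ι → G) :
    (insert a s).powerset.image (fun I => c + ∑ i ∈ I, n i) =
      s.powerset.image (fun I => c + ∑ i ∈ I, n i) ∪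
        (s.powerset.image fun I => c + ∑ i ∈ I, n i).image (· + n a) := by
  rw [Finset.powerset_insert, Finset.image_union, Finset.image_image, Finset.image_image]
  congr 1
  refine Finset.image_congr fun I hI => ?_
  have haI : a ∉ I := fun h => ha (Finset.mem_powerset.1 hI h)
  simp only [Function.comp_apply, Finset.sum_insert haI]
  abel

theorem Finset.min_card_le_card_image_powerset_add_sum [Fintype G] [DecidableEq G]
    {ι : Type*} [DecidableEq ι] (c : G) (n : ι → G) (s : Finset ι)
    (hn : ∀ i ∈ s, AddSubgroup.zmultiples (n i) = ⊤) :
    min (Fintype.card G) (s.card + 1) ≤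
      (s.powerset.image fun I => c + ∑ i ∈ I, n i).card := by
  induction s using Finset.induction_on with
  | empty => simp
  | insert a s ha ih =>
    rw [Finset.image_powerset_insert_add_sum ha, Finset.card_insert_of_notMem ha]
    have hS : (s.powerset.image fun I => c + ∑ i ∈ I, n i).Nonempty :=
      ⟨c + ∑ i ∈ ∅, n i, Finset.mem_image_of_mem _ (Finset.empty_mem_powerset s)⟩
    have hstep := Finset.min_card_succ_le_card_union_image_add
      (hn a (Finset.mem_insert_self a s)) hS
    have hih := ih fun i hi => hn i (Finset.mem_insert_of_mem hi)
    omega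

end SubsetSums

theorem ZMod.zmultiples_eq_top_of_isUnit {m : ℕ} {u : ZMod m} (hu : IsUnit u) :
    AddSubgroup.zmultiples u = ⊤ := by
  refine eq_top_iff.2 fun x _ => ⟨((x * ↑hu.unit⁻¹ : ZMod m).cast : ℤ), ?_⟩
  simp [zsmul_eq_mul, mul_assoc]

namespace MultAuto

theorem stmt2_general (m r : ℕ) (n₀ : ℕ) (n : Fin r → ℕ)
    (hcop : ∀ i, Nat.Coprime (n i) m) :
    min m (r + 1) ≤ ((Finset.univ : Finset (Finset (Fin r))).image
      (fun I => (n₀ + ∑ i ∈ I, n i) % m)).card := by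
  rcases Nat.eq_zero_or_pos m with rfl | hm
  · simp
  have : NeZero m := ⟨hm.ne'⟩
  have hgen : ∀ i ∈ Finset.univ, AddSubgroup.zmultiples (n i : ZMod m) = ⊤ := fun i _ =>
    ZMod.zmultiples_eq_top_of_isUnit ((ZMod.isUnit_iff_coprime _ _).2 (hcop i))
  have hmod := Finset.min_card_le_card_image_powerset_add_sum (n₀ : ZMod m) _ _ hgen
  rw [ZMod.card, Finset.card_univ, Fintype.card_fin, Finset.powerset_univ] at hmod
  calc min m (r + 1) ≤ _ := hmod
    _ = ((Finset.univ.image fun I => (n₀ + ∑ i ∈ I, n i) % m).image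
          (Nat.cast : ℕ → ZMod m)).card := by
      rw [Finset.image_image]
      congr 1
      exact Finset.image_congr fun I _ => by simp [ZMod.natCast_mod]
    _ ≤ _ := Finset.card_image_le

/-- an `IP_r^+` set with sidelengths coprime to `m` covers at least
`min m (r+1)` residues modulo `m`. -/
theorem stmt2 (m r : ℕ) (hm : 1 ≤ m) (n₀ : ℕ) (n : Fin r → ℕ)
    (hpos : ∀ i, 0 < n i) (hcop : ∀ i, Nat.Coprime (n i) m) :
    min m (r + 1) ≤ ((Finset.univ : Finset (Finset (Fin r))).image
      (fun I => (n₀ + ∑ i ∈ I, n i) % m)).card :=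
  stmt2_general m r n₀ n hcop

end MultAuto
end

section
/- Let k ≥ 2 be an integer and let a : ℕ₀ → ℂ be a multiplicative k-automatic sequence such that there are infinitely many primes p for which a(p^α) = 0 for some α ∈ ℕ. Then the set Z = {n ∈ ℕ : a(n) ≠ 0} is arid (in base k). -/
/-!
The automaton reads a numeral from its least significant digit. Let `Z` be the support of `a`
and `u w` the numeral of an element of `Z`, with `u` nonempty. If the state reached after reading
`w` had two non-commuting cycles `c₁, c₂`, every word `u (c₁c₂ | c₂c₁)* w` would again be the
numeral of an element of `Z`. The two blocks have equal length and different values, so for a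
prime `p` of the sparse set exceeding `k^{|c₁c₂|}`, with `a (p^α) = 0`, they can be combined into
such numerals in every residue class modulo `p^(α+1)`; the one congruent to `p^α` is exactly
divisible by `p^α`, and multiplicativity forces `a` to vanish on it.

So at every state on the path of a numeral of `Z` all cycles commute, and by Lyndon–Schützenberger
each of them is a power of a single cycle of bounded length. Cutting the numeral of `n ∈ Z` from
its top digit down, each time at the lowest position where the state in front of the current digit
occurs, writes it as `d_r v_r^{t_r} ⋯ d_1 v_1^{t_1}` with `r ≤ |S|`, short cycles `v_i` and
digits `d_i`; all exponents can be varied without leaving `Z`, and finitely many such shapes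
cover `Z`.
-/

open scoped BigOperators

namespace MultAuto

section Words

variable {k : ℕ}

@[simp] lemma wpow_zero (v : List ℕ) : wpow v 0 = [] := rfl

@[simp] lemma wpow_nil (n : ℕ) : wpow [] n = [] := by simp [wpow]

lemma wpow_add (v : List ℕ) (m n : ℕ) : wpow v (m + n) = wpow v m ++ wpow v n := by
  simp only [wpow, ← List.flatten_append, List.replicate_append_replicate]

lemma wpow_succ (v : List ℕ) (n : ℕ) : wpow v (n + 1) = v ++ wpow v n := by
  rw [add_comm, wpow_add]; simp [wpow]

lemma wpow_succ' (v : List ℕ) (n : ℕ) : wpow v (n + 1) = wpow v n ++ v := by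
  rw [wpow_add]; simp [wpow]

lemma wpow_mul (v : List ℕ) (m n : ℕ) : wpow v (m * n) = wpow (wpow v m) n := by
  induction n with
  | zero => rfl
  | succ n ih => rw [Nat.mul_succ, wpow_add, ih, wpow_succ']

lemma length_wpow (v : List ℕ) (n : ℕ) : (wpow v n).length = n * v.length := by
  simp [wpow, List.length_flatten, List.sum_replicate]

lemma mem_wpow {v : List ℕ} {n d : ℕ} : d ∈ wpow v n ↔ d ∈ v ∧ n ≠ 0 := by
  simp [wpow, List.mem_flatten, and_comm]

lemma isWord_append {u v : List ℕ} : IsWord k (u ++ v) ↔ IsWord k u ∧ IsWord k v := by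
  simp only [IsWord, List.mem_append, or_imp, forall_and]

lemma isWord_wpow {v : List ℕ} {n : ℕ} (hn : n ≠ 0) : IsWord k (wpow v n) ↔ IsWord k v := by
  simp [IsWord, mem_wpow, hn]

lemma IsWord.wpow {v : List ℕ} (hv : IsWord k v) (n : ℕ) : IsWord k (wpow v n) :=
  fun _ hd => hv _ (mem_wpow.1 hd).1

lemma noLeadZero_iff_head? {u : List ℕ} : NoLeadZero u ↔ u.head? ≠ some 0 := by
  cases u <;> simp [NoLeadZero]

lemma NoLeadZero.append {u : List ℕ} (h : NoLeadZero u) (hu : u ≠ []) (v : List ℕ) :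
    NoLeadZero (u ++ v) := by
  cases u with
  | nil => contradiction
  | cons => exact h

lemma NoLeadZero.of_append {u v : List ℕ} (h : NoLeadZero (u ++ v)) (hu : u ≠ []) :
    NoLeadZero u := by
  cases u with
  | nil => contradiction
  | cons => exact h

lemma wpow_mem {W : Set (List ℕ)} (hW₀ : [] ∈ W) (hW : ∀ w₁ ∈ W, ∀ w₂ ∈ W, w₁ ++ w₂ ∈ W)
    {v : List ℕ} (hv : v ∈ W) (m : ℕ) : wpow v m ∈ W := by
  induction m with
  | zero => exact hW₀
  | succ m ih => rw [wpow_succ]; exact hW _ hv _ ih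

end Words

section Valuation

variable {k : ℕ}

lemma valk_eq_ofDigits (u : List ℕ) : valk k u = Nat.ofDigits k u.reverse := by
  induction u using List.reverseRecOn with
  | nil => rfl
  | append_singleton u d ih =>
    rw [valk, List.foldl_append, ← valk, ih]
    simp [Nat.ofDigits_cons]
    ring

lemma valk_append (u v : List ℕ) : valk k (u ++ v) = valk k u * k ^ v.length + valk k v := by
  simp only [valk_eq_ofDigits, List.reverse_append, Nat.ofDigits_append, List.length_reverse]
  ring

lemma valk_lt (hk : 1 < k) {u : List ℕ} (hu : IsWord k u) : valk k u < k ^ u.length := by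
  rw [valk_eq_ofDigits, ← List.length_reverse]
  exact Nat.ofDigits_lt_base_pow_length hk fun d hd => hu d (List.mem_reverse.1 hd)

lemma valk_inj_of_length_eq (hk : 1 < k) {u v : List ℕ} (hu : IsWord k u) (hv : IsWord k v)
    (hlen : u.length = v.length) (h : valk k u = valk k v) : u = v := by
  rw [valk_eq_ofDigits, valk_eq_ofDigits] at h
  simpa using Nat.ofDigits_inj_of_len_eq hk (by simpa using hlen)
    (fun d hd => hu d (List.mem_reverse.1 hd)) (fun d hd => hv d (List.mem_reverse.1 hd)) h

lemma valk_pos (hk : 0 < k) {u : List ℕ} (hu : u ≠ []) (h0 : NoLeadZero u) : 0 < valk k u := by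
  obtain ⟨d, t, rfl⟩ := List.exists_cons_of_ne_nil hu
  rw [← List.singleton_append, valk_append]
  have hd : valk k [d] = d := by simp [valk]
  rw [hd]
  exact Nat.add_pos_left (Nat.mul_pos (Nat.pos_of_ne_zero h0) (pow_pos hk _)) _

lemma valk_digits_reverse (k n : ℕ) : valk k (Nat.digits k n).reverse = n := by
  rw [valk_eq_ofDigits, List.reverse_reverse, Nat.ofDigits_digits]

end Valuation

section Pumping

variable {k n : ℕ}

lemma cast_valk_append {w b : List ℕ} (hb : (k : ZMod n) ^ b.length = 1) :
    (valk k (w ++ b) : ZMod n) = valk k w + valk k b := by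
  rw [valk_append]; push_cast; rw [hb, mul_one]

lemma cast_valk_append_wpow {w b : List ℕ} (hb : (k : ZMod n) ^ b.length = 1) (s : ℕ) :
    (valk k (w ++ wpow b s) : ZMod n) = valk k w + s * valk k b := by
  induction s with
  | zero => simp
  | succ s ih => rw [wpow_succ', ← List.append_assoc, cast_valk_append hb, ih]; push_cast; ring

lemma exists_cast_valk_eq [NeZero n] (hk : IsUnit (k : ZMod n)) {b : List ℕ}
    (hb : (k : ZMod n) ^ b.length = 1) (hb' : IsUnit (valk k b : ZMod n)) (u v : List ℕ)
    (r : ZMod n) : ∃ s : ℕ, (valk k (u ++ wpow b s ++ v) : ZMod n) = r := by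
  obtain ⟨κ, hκ⟩ := hk.pow v.length
  obtain ⟨β, hβ⟩ := hb'
  refine ⟨(((r - valk k v) * ↑κ⁻¹ - valk k u) * ↑β⁻¹ : ZMod n).val, ?_⟩
  rw [valk_append, Nat.cast_add, Nat.cast_mul, cast_valk_append_wpow hb, ZMod.natCast_zmod_val]
  push_cast
  rw [← hκ, ← hβ]
  linear_combination ((r - valk k v) * ↑κ⁻¹ - valk k u) * ↑κ * β.inv_mul +
    (r - valk k v) * κ.inv_mul

lemma exists_mem_cast_valk_isUnit [NeZero n] {W : Set (List ℕ)} (hW₀ : [] ∈ W)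
    (hW : ∀ w₁ ∈ W, ∀ w₂ ∈ W, w₁ ++ w₂ ∈ W) (hkn : k.Coprime n) {x y : List ℕ}
    (hx : x ∈ W) (hy : y ∈ W) (hlen : x.length = y.length) (hxy : valk k y < valk k x)
    (hD : (valk k x - valk k y).Coprime n) :
    ∃ ρ ∈ W, (k : ZMod n) ^ ρ.length = 1 ∧ IsUnit (valk k ρ : ZMod n) := by
  have hM : 0 < n.totient := Nat.totient_pos.2 (NeZero.pos n)
  have hkM : (k : ZMod n) ^ n.totient = 1 := by
    rw [← ZMod.coe_unitOfCoprime k hkn, ← Units.val_pow_eq_pow_val, ZMod.pow_totient, Units.val_one]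
  set Y := wpow y (n.totient - 1)
  have hY : Y ∈ W := wpow_mem hW₀ hW hy _
  have hγ : (k : ZMod n) ^ (y ++ Y).length = 1 := by
    rw [← wpow_succ, Nat.sub_add_cancel hM, length_wpow, pow_mul, hkM, one_pow]
  have hβ : (x ++ Y).length = (y ++ Y).length := by simp [hlen]
  -- Modulo `n`, appending a block of length divisible by `φ n` adds its value, so
  -- `[x Y (y Y)^(n-1)] ≡ [x Y] - [y Y] = ([x] - [y]) k^|Y|`.
  refine ⟨x ++ Y ++ wpow (y ++ Y) (n - 1), hW _ (hW _ hx _ hY) _ (wpow_mem hW₀ hW (hW _ hy _ hY) _),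
    ?_, ?_⟩
  · rw [List.length_append, pow_add, length_wpow, pow_mul', hβ, hγ, one_pow, one_mul]
  · have hval : (valk k (x ++ Y ++ wpow (y ++ Y) (n - 1)) : ZMod n)
        = (valk k x - valk k y : ℕ) * (k : ZMod n) ^ Y.length := by
      rw [cast_valk_append_wpow hγ, valk_append, valk_append, Nat.cast_pred (NeZero.pos n),
        ZMod.natCast_self, Nat.cast_sub hxy.le]
      push_cast
      ring
    rw [hval]
    exact ((ZMod.isUnit_iff_coprime _ _).2 hD).mul (((ZMod.isUnit_iff_coprime k n).2 hkn).pow _)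

lemma IsMult.apply_eq_zero_of_natCast_eq {a : ℕ → ℂ} (hmul : IsMult a) {p α N : ℕ}
    (hp : p.Prime) (hpα : a (p ^ α) = 0) (hN : (N : ZMod (p ^ (α + 1))) = (p ^ α : ℕ)) :
    a N = 0 := by
  have hmod : N % p ^ (α + 1) = p ^ α := by
    rw [(ZMod.natCast_eq_natCast_iff' _ _ _).1 hN,
      Nat.mod_eq_of_lt (Nat.pow_lt_pow_right hp.one_lt (by omega))]
  have hN' : N = p ^ α * (N / p ^ (α + 1) * p + 1) := by
    conv_lhs => rw [← Nat.div_add_mod N (p ^ (α + 1)), hmod]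
    ring
  have hcop : (p ^ α).Coprime (N / p ^ (α + 1) * p + 1) :=
    Nat.Coprime.pow_left _ ((Nat.coprime_mul_right_add_right _ _ _).2 (Nat.coprime_one_right _))
  rw [hN', hmul _ _ (pow_pos hp.pos _) (Nat.succ_pos _) hcop, hpα, zero_mul]

theorem exists_mem_apply_valk_eq_zero {a : ℕ → ℂ} (hk : 1 < k) (hmul : IsMult a)
    (hsparse : {p : ℕ | p.Prime ∧ ∃ α : ℕ, 0 < α ∧ a (p ^ α) = 0}.Infinite)
    {W : Set (List ℕ)} (hW₀ : [] ∈ W) (hW : ∀ w₁ ∈ W, ∀ w₂ ∈ W, w₁ ++ w₂ ∈ W)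
    {x y : List ℕ} (hx : x ∈ W) (hy : y ∈ W) (hxk : IsWord k x) (hyk : IsWord k y)
    (hlen : x.length = y.length) (hne : x ≠ y) (u v : List ℕ) :
    ∃ w ∈ W, a (valk k (u ++ w ++ v)) = 0 := by
  wlog hxy : valk k y < valk k x generalizing x y
  · refine this hy hx hyk hxk hlen.symm hne.symm (lt_of_le_of_ne (not_lt.1 hxy) fun h => ?_)
    exact hne (valk_inj_of_length_eq hk hxk hyk hlen h)
  obtain ⟨p, ⟨hp, α, -, hpα⟩, hpk⟩ := hsparse.exists_gt (k ^ (x.length + 1))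
  have : NeZero (p ^ (α + 1)) := ⟨pow_ne_zero _ hp.ne_zero⟩
  have hcop : ∀ m, 0 < m → m < p → m.Coprime (p ^ (α + 1)) := fun m h0 hm =>
    Nat.Coprime.pow_right _ (Nat.coprime_of_lt_prime h0.ne' hm hp).symm
  have hkp : k < p := (Nat.le_self_pow (by omega) k).trans_lt hpk
  have hDp : valk k x - valk k y < p :=
    calc valk k x - valk k y ≤ valk k x := Nat.sub_le _ _
      _ < k ^ x.length := valk_lt hk hxk
      _ ≤ k ^ (x.length + 1) := Nat.pow_le_pow_right (by omega) (by omega)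
      _ < p := hpk
  obtain ⟨ρ, hρW, hρk, hρ⟩ := exists_mem_cast_valk_isUnit hW₀ hW (hcop k (by omega) hkp) hx hy hlen
    hxy (hcop _ (by omega) hDp)
  obtain ⟨s, hs⟩ := exists_cast_valk_eq ((ZMod.isUnit_iff_coprime _ _).2 (hcop k (by omega) hkp))
    hρk hρ u v (p ^ α : ℕ)
  exact ⟨wpow ρ s, wpow_mem hW₀ hW hρW s, hmul.apply_eq_zero_of_natCast_eq hp hpα hs⟩

end Pumping

section Cycles

variable {k : ℕ} {S : Type*} {δ : ℕ → S → S}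

lemma deltaW_append (u v : List ℕ) : deltaW δ (u ++ v) = deltaW δ u ∘ deltaW δ v := by
  induction u with
  | nil => rfl
  | cons d u ih => simp only [List.cons_append, deltaW, ih]; rfl

lemma deltaW_wpow (v : List ℕ) (n : ℕ) : deltaW δ (wpow v n) = (deltaW δ v)^[n] := by
  induction n with
  | zero => rfl
  | succ n ih => rw [wpow_succ, deltaW_append, ih, Function.iterate_succ']

lemma exists_common_root_of_append_comm {x y : List ℕ} (h : x ++ y = y ++ x) :
    ∃ z i j, x = wpow z i ∧ y = wpow z j := by
  induction hn : x.length + y.length using Nat.strong_induction_on generalizing x y with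
  | _ n ih =>
  wlog hxy : x.length ≤ y.length generalizing x y
  · obtain ⟨z, i, j, hx, hy⟩ := this h.symm (by omega) (by omega)
    exact ⟨z, j, i, hy, hx⟩
  rcases eq_or_ne x [] with rfl | hx
  · exact ⟨y, 0, 1, rfl, by simp [wpow]⟩
  obtain ⟨y', rfl⟩ : x <+: y :=
    List.prefix_of_prefix_length_le (h ▸ List.prefix_append x y) (List.prefix_append y x) hxy
  have h' : x ++ y' = y' ++ x := by simpa using h
  obtain ⟨z, i, j, rfl, rfl⟩ := ih _ (by simp [← hn, List.length_pos_iff.2 hx]) h' rfl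
  exact ⟨z, i, i + j, rfl, (wpow_add z i j).symm⟩

lemma exists_short_cycle_root_of_append_comm [Fintype S] {s : S} {c₀ C : List ℕ} (hc₀ : c₀ ≠ [])
    (hc₀k : IsWord k c₀) (hc₀s : deltaW δ c₀ s = s) (hCs : deltaW δ C s = s)
    (hcomm : C ++ c₀ = c₀ ++ C) :
    ∃ v t, IsWord k v ∧ v.length ≤ Fintype.card S * c₀.length ∧ deltaW δ v s = s ∧
      C = wpow v t := by
  obtain ⟨z, i, j, rfl, rfl⟩ := exists_common_root_of_append_comm hcomm
  have hj : j ≠ 0 := by rintro rfl; exact hc₀ rfl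
  rw [deltaW_wpow] at hc₀s hCs
  obtain ⟨t, rfl⟩ := Function.IsPeriodicPt.minimalPeriod_dvd hCs
  refine ⟨wpow z (Function.minimalPeriod (deltaW δ z) s), t, ((isWord_wpow hj).1 hc₀k).wpow _,
    ?_, ?_, wpow_mul _ _ _⟩
  · rw [length_wpow, length_wpow]
    exact Nat.mul_le_mul Function.minimalPeriod_le_card
      (Nat.le_mul_of_pos_left _ (Nat.pos_of_ne_zero hj))
  · rw [deltaW_wpow]
    exact Function.isPeriodicPt_minimalPeriod _ _

variable (k δ) in
def CyclesArePowers (G : Set (List ℕ)) (s : S) : Prop :=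
  ∀ C, IsWord k C → deltaW δ C s = s → ∃ v ∈ G, deltaW δ v s = s ∧ ∃ t, C = wpow v t

lemma CyclesArePowers.mono {G G' : Set (List ℕ)} {s : S} (h : CyclesArePowers k δ G s)
    (hG : G ⊆ G') : CyclesArePowers k δ G' s := fun C hC hCs =>
  let ⟨v, hv, hvs, t, hC⟩ := h C hC hCs
  ⟨v, hG hv, hvs, t, hC⟩

variable (k δ) in
lemma exists_cyclesArePowers [Fintype S] : ∃ B, ∀ s : S,
    (∀ c₁ c₂, IsWord k c₁ → IsWord k c₂ → deltaW δ c₁ s = s → deltaW δ c₂ s = s →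
      c₁ ++ c₂ = c₂ ++ c₁) →
    CyclesArePowers k δ {w | IsWord k w ∧ w.length ≤ B} s := by
  have : ∀ s : S, ∃ c₀, IsWord k c₀ ∧ deltaW δ c₀ s = s ∧
      ∀ C, IsWord k C → deltaW δ C s = s → C ≠ [] → c₀ ≠ [] := by
    intro s
    by_cases h : ∃ C, IsWord k C ∧ deltaW δ C s = s ∧ C ≠ []
    · obtain ⟨C, hC, hCs, hC₀⟩ := h
      exact ⟨C, hC, hCs, fun _ _ _ _ => hC₀⟩
    · push Not at h
      exact ⟨[], by simp [IsWord], rfl, fun C hC hCs hC₀ => absurd (h C hC hCs) hC₀⟩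
  choose c₀ hc₀k hc₀s hc₀ using this
  refine ⟨Fintype.card S * Finset.univ.sup fun s => (c₀ s).length, fun s hcomm C hC hCs => ?_⟩
  rcases eq_or_ne C [] with rfl | hC₀
  · exact ⟨[], ⟨by simp [IsWord], Nat.zero_le _⟩, rfl, 0, rfl⟩
  obtain ⟨v, t, hv, hvlen, hvs, rfl⟩ := exists_short_cycle_root_of_append_comm (hc₀ s C hC hCs hC₀)
    (hc₀k s) (hc₀s s) hCs (hcomm _ _ hC (hc₀k s) hCs (hc₀s s))
  refine ⟨v, ⟨hv, hvlen.trans (Nat.mul_le_mul_left _ ?_)⟩, hvs, t, rfl⟩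
  exact Finset.le_sup (f := fun s => (c₀ s).length) (Finset.mem_univ s)

end Cycles

section Decomposition

variable {k : ℕ} {S : Type*} {δ : ℕ → S → S}

lemma exists_shortest_suffix {α : Type*} (P : List α → Prop) {w : List α} (hw : P w) :
    ∃ C w₀, w = C ++ w₀ ∧ P w₀ ∧ ∀ t w₂, w₀ = t ++ w₂ → t ≠ [] → ¬ P w₂ := by
  obtain ⟨w₀, ⟨C, rfl, hw₀⟩, hmin⟩ :=
    (measure List.length).wf.has_min {w₀ | ∃ C, w = C ++ w₀ ∧ P w₀} ⟨w, [], rfl, hw⟩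
  refine ⟨C, w₀, rfl, hw₀, ?_⟩
  rintro t w₂ rfl ht hw₂
  refine hmin w₂ ⟨C ++ t, ?_, hw₂⟩ ?_
  · exact (List.append_assoc _ _ _).symm
  · show w₂.length < (t ++ w₂).length
    simp [List.length_pos_iff.2 ht]

lemma aridWord_congr {u v u' v' : ℕ → List ℕ} {l l' : ℕ → ℕ} {r : ℕ}
    (h : ∀ i ≤ r, u i = u' i ∧ v i = v' i ∧ l i = l' i) :
    aridWord u v l r = aridWord u' v' l' r := by
  induction r with
  | zero => exact (h 0 le_rfl).1
  | succ r ih =>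
    obtain ⟨hu, hv, hl⟩ := h (r + 1) le_rfl
    simp only [aridWord, hu, hv, hl, ih fun i hi => h i (by omega)]

@[simp] lemma aridWord_const_nil (l : ℕ → ℕ) (r : ℕ) :
    aridWord (fun _ => []) (fun _ => []) l r = [] := by
  induction r with
  | zero => rfl
  | succ r ih => simp [aridWord, ih]

lemma aridWord_update (u v : ℕ → List ℕ) (l : ℕ → ℕ) (r : ℕ) (x y : List ℕ) :
    aridWord (Function.update u (r + 1) x) (Function.update v (r + 1) y) l (r + 1)
      = x ++ wpow y (l (r + 1)) ++ aridWord u v l r := by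
  simp only [aridWord, Function.update_self]
  congr 1
  exact aridWord_congr fun i hi =>
    ⟨Function.update_of_ne (by omega) _ _, Function.update_of_ne (by omega) _ _, rfl⟩

lemma IsWord.aridWord {u v : ℕ → List ℕ} (hu : ∀ i, IsWord k (u i)) (hv : ∀ i, IsWord k (v i))
    (l : ℕ → ℕ) (r : ℕ) : IsWord k (aridWord u v l r) := by
  induction r with
  | zero => exact hu 0
  | succ r ih => exact isWord_append.2 ⟨isWord_append.2 ⟨hu _, (hv _).wpow _⟩, ih⟩

theorem exists_aridWord_eq [DecidableEq S] {G : Set (List ℕ)} (hG₀ : [] ∈ G)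
    (hG₁ : ∀ d < k, [d] ∈ G) (s₀ : S) (T : Finset S) (w : List ℕ) (hw : IsWord k w)
    (hroot : ∀ t w₂, w = t ++ w₂ → t ≠ [] →
      deltaW δ w₂ s₀ ∈ T ∧ CyclesArePowers k δ G (deltaW δ w₂ s₀)) :
    ∃ (u v : ℕ → List ℕ) (t : ℕ → ℕ), (∀ i, u i ∈ G ∧ v i ∈ G) ∧
      aridWord u v t T.card = w ∧ ∀ l, deltaW δ (aridWord u v l T.card) s₀ = deltaW δ w s₀ ∧
        (aridWord u v l T.card).head? = w.head? := by
  induction hn : w.length using Nat.strong_induction_on generalizing T w with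
  | _ n ih =>
  obtain _ | ⟨d, w'⟩ := w
  · exact ⟨fun _ => [], fun _ => [], fun _ => 0, fun _ => ⟨hG₀, hG₀⟩, aridWord_const_nil _ _,
      fun l => by simp⟩
  obtain ⟨s, hs⟩ : ∃ s, deltaW δ w' s₀ = s := ⟨_, rfl⟩
  obtain ⟨hsT, hsG⟩ := hroot [d] w' rfl (List.cons_ne_nil _ _)
  rw [hs] at hsT hsG
  -- Cut at the shortest suffix `w₀` that already reaches the state `s` in front of the top digit:
  -- `s` does not occur again further down, so it can be erased from `T`.
  obtain ⟨C, w₀, rfl, hw₀, hmin⟩ := exists_shortest_suffix (fun x => deltaW δ x s₀ = s) hs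
  have hCs : deltaW δ C s = s := by rwa [deltaW_append, Function.comp_apply, hw₀] at hs
  obtain ⟨hd, hCw₀⟩ := isWord_append.1 (show IsWord k ([d] ++ (C ++ w₀)) from hw)
  obtain ⟨hCk, hw₀k⟩ := isWord_append.1 hCw₀
  obtain ⟨v₀, hv₀G, hv₀s, e, rfl⟩ := hsG C hCk hCs
  have hroot₀ : ∀ t w₂, w₀ = t ++ w₂ → t ≠ [] →
      deltaW δ w₂ s₀ ∈ T.erase s ∧ CyclesArePowers k δ G (deltaW δ w₂ s₀) := by
    intro t w₂ h ht
    obtain ⟨hT, hG⟩ := hroot (d :: (wpow v₀ e ++ t)) w₂ (by simp [h]) (List.cons_ne_nil _ _)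
    exact ⟨Finset.mem_erase.2 ⟨hmin t w₂ h ht, hT⟩, hG⟩
  obtain ⟨u, v, t, huvG, hword, hδ⟩ :=
    ih w₀.length (by simp [← hn]) (T.erase s) w₀ hw₀k hroot₀ rfl
  rw [← Finset.card_erase_add_one hsT]
  set r := (T.erase s).card
  refine ⟨Function.update u (r + 1) [d], Function.update v (r + 1) v₀, Function.update t (r + 1) e,
    fun i => ?_, ?_, fun l => ?_⟩
  · rcases eq_or_ne i (r + 1) with rfl | hi
    · simpa using ⟨hG₁ d (hd d (List.mem_singleton_self d)), hv₀G⟩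
    · simpa [Function.update_of_ne hi] using huvG i
  · rw [aridWord_update, Function.update_self, ← hword]
    simp only [List.cons_append]
    congr 2
    exact aridWord_congr fun i hi => ⟨rfl, rfl, Function.update_of_ne (by omega) _ _⟩
  · rw [aridWord_update]
    refine ⟨?_, rfl⟩
    have h : deltaW δ ([d] ++ wpow v₀ (l (r + 1)) ++ aridWord u v l r) s₀ = deltaW δ [d] s := by
      simp only [deltaW_append, Function.comp_apply, (hδ l).1, hw₀, deltaW_wpow,
        Function.iterate_fixed hv₀s]
    rw [h, ← hs]
    rfl

end Decomposition

section AridSets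

variable {k r : ℕ}

def aridSet (k r : ℕ) (u v : ℕ → List ℕ) : Set ℕ :=
  {n | ∃ l : ℕ → ℕ, n = valk k (aridWord u v l r)}

lemma finite_setOf_isWord_length_le (k B : ℕ) :
    {w : List ℕ | IsWord k w ∧ w.length ≤ B}.Finite := by
  refine ((List.finite_length_le (Fin k) B).image (List.map Fin.val)).subset ?_
  rintro w ⟨hw, hB⟩
  have hw' : ∀ d ∈ w, d < k := hw
  refine ⟨w.pmap Fin.mk hw', ?_, ?_⟩
  · show (w.pmap Fin.mk hw').length ≤ B
    rwa [List.length_pmap]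
  · simp [List.map_pmap]

lemma AridOfRank.biUnion {ι : Type*} {F : Set ι} (hF : F.Finite) {A : ι → Set ℕ}
    (hA : ∀ i ∈ F, BasicArid k r (A i)) : AridOfRank k r (⋃ i ∈ F, A i) := by
  have := hF.to_subtype
  refine ⟨Nat.card F, fun j => A ((Finite.equivFin F).symm j),
    fun j => hA _ ((Finite.equivFin F).symm j).2, ?_⟩
  rw [Set.biUnion_eq_iUnion]
  exact ((Finite.equivFin F).symm.surjective.iUnion_comp fun i : F => A i).symm

lemma aridOfRank_of_forall_mem_aridSet {G : Set (List ℕ)} (hG : G.Finite)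
    (hGk : ∀ w ∈ G, IsWord k w) {Z : Set ℕ}
    (hZ : ∀ n ∈ Z, ∃ u v : ℕ → List ℕ, (∀ i, u i ∈ G ∧ v i ∈ G) ∧
      n ∈ aridSet k r u v ∧ aridSet k r u v ⊆ Z) :
    AridOfRank k r Z := by
  let ext (g : Fin (r + 1) → List ℕ) (i : ℕ) : List ℕ := if h : i < r + 1 then g ⟨i, h⟩ else []
  let A (q : (Fin (r + 1) → List ℕ) × (Fin (r + 1) → List ℕ)) : Set ℕ :=
    aridSet k r (ext q.1) (ext q.2)
  let F := {q ∈ Set.univ.pi (fun _ => G) ×ˢ Set.univ.pi (fun _ => G) | A q ⊆ Z}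
  have hF : F.Finite :=
    ((Set.Finite.pi fun _ => hG).prod (Set.Finite.pi fun _ => hG)).subset (Set.sep_subset _ _)
  have hext : ∀ g : Fin (r + 1) → List ℕ, (∀ i, g i ∈ G) → ∀ i, IsWord k (ext g i) := by
    intro g hg i
    dsimp only [ext]
    split_ifs
    exacts [hGk _ (hg _), by simp [IsWord]]
  have hZF : Z = ⋃ q ∈ F, A q := by
    refine Set.Subset.antisymm (fun n hn => ?_) (Set.iUnion₂_subset fun q hq => hq.2)
    obtain ⟨u, v, huv, hn, hsub⟩ := hZ n hn
    set q : (Fin (r + 1) → List ℕ) × (Fin (r + 1) → List ℕ) := (fun i => u i, fun i => v i)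
    have hA : A q = aridSet k r u v := by
      ext m
      refine exists_congr fun l => ?_
      rw [aridWord_congr fun i hi => ⟨dif_pos (by omega), dif_pos (by omega), rfl⟩]
    have hq : q ∈ F := ⟨⟨fun i _ => (huv i).1, fun i _ => (huv i).2⟩, hA ▸ hsub⟩
    exact Set.mem_biUnion hq (hA ▸ hn)
  rw [hZF]
  exact AridOfRank.biUnion hF fun q hq =>
    ⟨ext q.1, ext q.2, hext _ fun i => hq.1.1 i trivial, hext _ fun i => hq.1.2 i trivial, rfl⟩

end AridSets

section Automatic

variable {k : ℕ} {S : Type*} {δ : ℕ → S → S}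

theorem append_comm_of_cycles {a : ℕ → ℂ} {s₀ : S} {τ : S → ℂ} (hk : 1 < k) (hmul : IsMult a)
    (hsparse : {p : ℕ | p.Prime ∧ ∃ α : ℕ, 0 < α ∧ a (p ^ α) = 0}.Infinite)
    (hτ : ∀ w, IsWord k w → NoLeadZero w → a (valk k w) = τ (deltaW δ w s₀))
    {u w : List ℕ} (hu : IsWord k u) (hu₀ : u ≠ []) (h0 : NoLeadZero u) (hw : IsWord k w)
    (ha : a (valk k (u ++ w)) ≠ 0) {c₁ c₂ : List ℕ} (hc₁ : IsWord k c₁) (hc₂ : IsWord k c₂)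
    (h₁ : deltaW δ c₁ (deltaW δ w s₀) = deltaW δ w s₀)
    (h₂ : deltaW δ c₂ (deltaW δ w s₀) = deltaW δ w s₀) :
    c₁ ++ c₂ = c₂ ++ c₁ := by
  by_contra hne
  let W := {c | IsWord k c ∧ deltaW δ c (deltaW δ w s₀) = deltaW δ w s₀}
  have hW : ∀ c₁ ∈ W, ∀ c₂ ∈ W, c₁ ++ c₂ ∈ W := fun c₁ h₁ c₂ h₂ =>
    ⟨isWord_append.2 ⟨h₁.1, h₂.1⟩, by rw [deltaW_append, Function.comp_apply, h₂.2, h₁.2]⟩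
  obtain ⟨c, ⟨hc, hcs⟩, hc0⟩ := exists_mem_apply_valk_eq_zero hk hmul hsparse
    (W := W) ⟨by simp [IsWord], rfl⟩ hW (hW _ ⟨hc₁, h₁⟩ _ ⟨hc₂, h₂⟩) (hW _ ⟨hc₂, h₂⟩ _ ⟨hc₁, h₁⟩)
    (isWord_append.2 ⟨hc₁, hc₂⟩) (isWord_append.2 ⟨hc₂, hc₁⟩) (by simp [add_comm]) hne u w
  apply ha
  rw [hτ _ (isWord_append.2 ⟨hu, hw⟩) (h0.append hu₀ _), ← hc0, hτ _
    (isWord_append.2 ⟨isWord_append.2 ⟨hu, hc⟩, hw⟩) (List.append_assoc u c w ▸ h0.append hu₀ _)]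
  simp only [deltaW_append, Function.comp_apply, hcs]

lemma exists_word_valk_eq (hk : 1 < k) {n : ℕ} (hn : 0 < n) :
    ∃ X, IsWord k X ∧ X ≠ [] ∧ NoLeadZero X ∧ valk k X = n := by
  refine ⟨(Nat.digits k n).reverse, fun d hd => Nat.digits_lt_base hk (List.mem_reverse.1 hd),
    by simpa using Nat.digits_ne_nil_iff_ne_zero.2 hn.ne', ?_, valk_digits_reverse k n⟩
  rw [noLeadZero_iff_head?, List.head?_reverse,
    List.getLast?_eq_getLast_of_ne_nil (Nat.digits_ne_nil_iff_ne_zero.2 hn.ne')]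
  simpa using Nat.getLast_digit_ne_zero k hn.ne'

lemma mem_support_of_deltaW_eq {a : ℕ → ℂ} {s₀ : S} {τ : S → ℂ} (hk : 0 < k)
    (hτ : ∀ w, IsWord k w → NoLeadZero w → a (valk k w) = τ (deltaW δ w s₀))
    {w w' : List ℕ} (hw : IsWord k w) (hw₀ : w ≠ []) (h0 : NoLeadZero w) (ha : a (valk k w) ≠ 0)
    (hw' : IsWord k w') (hhead : w'.head? = w.head?) (hδ : deltaW δ w' s₀ = deltaW δ w s₀) :
    0 < valk k w' ∧ a (valk k w') ≠ 0 := by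
  have h0' : NoLeadZero w' := noLeadZero_iff_head?.2 (hhead ▸ noLeadZero_iff_head?.1 h0)
  have hw₀' : w' ≠ [] := fun h => hw₀ (List.head?_eq_none_iff.1 (by rw [← hhead, h]; rfl))
  refine ⟨valk_pos hk hw₀' h0', ?_⟩
  rwa [hτ _ hw' h0', hδ, ← hτ w hw h0]

end Automatic

/-- in the sparse case, the set `Z = {n ∈ ℕ : a n ≠ 0}` is arid in base `k`. -/
theorem stmt3 (k : ℕ) (hk : 2 ≤ k) (a : ℕ → ℂ)
    (ha : IsAutomatic k a) (hmul : IsMult a)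
    (hsparse : {p : ℕ | p.Prime ∧ ∃ α : ℕ, 0 < α ∧ a (p ^ α) = 0}.Infinite) :
    Arid k {n : ℕ | 0 < n ∧ a n ≠ 0} := by
  classical
  obtain ⟨S, _, s₀, δ, τ, hτ⟩ := ha
  obtain ⟨B, hB⟩ := exists_cyclesArePowers k δ
  let G := {w : List ℕ | IsWord k w ∧ w.length ≤ max B 1}
  refine ⟨Fintype.card S, aridOfRank_of_forall_mem_aridSet
    (finite_setOf_isWord_length_le k (max B 1)) (fun _ hw => hw.1) fun n ⟨hn, han⟩ => ?_⟩
  obtain ⟨X, hXk, hX₀, hX0, rfl⟩ := exists_word_valk_eq (k := k) (by omega) hn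
  have hroot : ∀ p w₂, X = p ++ w₂ → p ≠ [] →
      deltaW δ w₂ s₀ ∈ Finset.univ ∧ CyclesArePowers k δ G (deltaW δ w₂ s₀) := by
    rintro p w₂ rfl hp
    obtain ⟨hpk, hw₂k⟩ := isWord_append.1 hXk
    refine ⟨Finset.mem_univ _, (hB _ fun c₁ c₂ => append_comm_of_cycles (by omega) hmul hsparse
      hτ hpk hp (hX0.of_append hp) hw₂k han).mono fun w hw => ⟨hw.1, hw.2.trans (le_max_left _ _)⟩⟩
  obtain ⟨u, v, t, huv, hXeq, hδ⟩ := exists_aridWord_eq (G := G) ⟨by simp [IsWord], by simp⟩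
    (fun d hd => ⟨by simp [IsWord, hd], by simp⟩) s₀ Finset.univ X hXk hroot
  rw [Finset.card_univ] at hXeq hδ
  refine ⟨u, v, huv, ⟨t, by rw [hXeq]⟩, ?_⟩
  rintro _ ⟨l, rfl⟩
  exact mem_support_of_deltaW_eq (by omega) hτ hXk hX₀ hX0 han
    (IsWord.aridWord (fun i => (huv i).1.1) (fun i => (huv i).2.1) l _) (hδ l).2 (hδ l).1

end MultAuto
end

section
/- Let k ≥ 2 be an integer. For any x₁, …, x_r ∈ ℚ there exists a constant C ≥ 0 such that the following is true: whenever α₁, …, α_r ∈ ℕ₀ satisfy Σ_{i=1}^r x_i k^{α_i} = 0, there exist a partition {1,…,r} = I₁ ∪ ⋯ ∪ I_s into nonempty pairwise disjoint sets and γ₁, …, γ_s ∈ ℕ₀ such that Σ_{i ∈ I_j} x_i k^{α_i} = 0 for every j ∈ {1,…,s}, and |γ_j − α_i| < C for all i ∈ I_j and all j ∈ {1,…,s}. -/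
open scoped BigOperators

namespace MultAuto

/-!
After clearing denominators the coefficients are integers `z i`; fix `D` with `∑ |z i| < k ^ D`.
If the exponents of a vanishing sum over `F` do not all lie within `D * #F` of the smallest one,
pigeonholing the buckets `(α i - min) / D` yields a window `[t, t + D)` free of exponents with
exponents on both sides. The part of the sum below `t` is then divisible by `k ^ (t + D)`, being
minus the part above, but smaller than `k ^ (t + D)` in absolute value; so both parts vanish and
one recurses on them.
-/

open Finset

theorem _root_.Rat.exist_integer_multiples {ι : Type*} (s : Finset ι) (x : ι → ℚ) :
    ∃ (q : ℤ) (z : ι → ℤ), q ≠ 0 ∧ ∀ i ∈ s, (z i : ℚ) = q * x i := by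
  obtain ⟨b, hb⟩ := IsLocalization.exist_integer_multiples (nonZeroDivisors ℤ) s x
  refine ⟨b, fun i => ⌊(b : ℚ) * x i⌋, nonZeroDivisors.coe_ne_zero b, fun i hi => ?_⟩
  obtain ⟨n, hn⟩ := hb i hi
  simp only [algebraMap_int_eq, eq_intCast, zsmul_eq_mul] at hn
  beta_reduce
  rw [← hn, Int.floor_intCast]

theorem _root_.Finset.exists_bijOn_Icc {β : Type*} [Inhabited β] (t : Finset β) :
    ∃ I : ℕ → β, Set.BijOn I (Icc 1 #t) t := by
  let e := t.equivFin
  refine ⟨fun j => if h : j - 1 < #t then e.symm ⟨j - 1, h⟩ else default, ?_, ?_, ?_⟩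
  · intro j hj
    simp only [coe_Icc, Set.mem_Icc] at hj
    simp [show j - 1 < #t by omega]
  · intro j₁ h₁ j₂ h₂ h
    simp only [coe_Icc, Set.mem_Icc] at h₁ h₂
    simp only [show j₁ - 1 < #t by omega, show j₂ - 1 < #t by omega, dite_true,
      Subtype.coe_inj, e.symm.apply_eq_iff_eq, Fin.mk.injEq] at h
    omega
  · intro b hb
    refine ⟨e ⟨b, hb⟩ + 1, by simp [Nat.succ_le_of_lt (e ⟨b, hb⟩).isLt], ?_⟩
    simp

theorem _root_.Finpartition.exists_forall_of_parts {α : Type*} [Lattice α] [OrderBot α]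
    [IsModularLattice α] [DecidableEq α] {a : α} (Q : Finpartition a) {G : α → Prop}
    (h : ∀ q ∈ Q.parts, ∃ P : Finpartition q, ∀ p ∈ P.parts, G p) :
    ∃ P : Finpartition a, ∀ p ∈ P.parts, G p := by
  choose R hR using h
  refine ⟨Q.bind R, fun p hp => ?_⟩
  obtain ⟨q, hq, hpq⟩ := Finpartition.mem_bind.1 hp
  exact hR q hq p hpq

theorem _root_.Finpartition.biUnion_eq_of_bijOn {ι κ : Type*} [DecidableEq ι] {s : Finset ι}
    (P : Finpartition s) {t : Finset κ} {I : κ → Finset ι} (hI : Set.BijOn I t P.parts) :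
    t.biUnion I = s :=
  calc t.biUnion I = (t.image I).biUnion id := by rw [image_biUnion]; rfl
    _ = s := by rw [coe_inj.1 (coe_image.trans hI.image_eq), P.biUnion_parts]

theorem exists_lt_card_notMem_image {ι : Type*} {F : Finset ι} (f : ι → ℕ) {i₀ : ι}
    (hi₀ : i₀ ∈ F) (h : #F ≤ f i₀) : ∃ j < #F, j ∉ F.image f := by
  by_contra! hall
  have hsub : insert (f i₀) (range #F) ⊆ F.image f :=
    insert_subset (mem_image_of_mem f hi₀) fun j hj => hall j (mem_range.1 hj)
  have hcard := (card_le_card hsub).trans card_image_le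
  rw [card_insert_of_notMem (by simpa using h), card_range] at hcard
  omega

theorem exists_exponent_gap {ι : Type*} {F : Finset ι} (α : ι → ℕ) {D : ℕ} (hD : 0 < D)
    {i₁ i₀ : ι} (hi₁ : i₁ ∈ F) (hi₀ : i₀ ∈ F) (hspread : α i₁ + D * #F ≤ α i₀) :
    ∃ t, α i₁ < t ∧ t ≤ α i₀ ∧ ∀ i ∈ F, t ≤ α i → t + D ≤ α i := by
  set m := α i₁
  have hbucket (i : ι) (j : ℕ) : j ≤ (α i - m) / D ↔ j * D ≤ α i - m := Nat.le_div_iff_mul_le hD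
  obtain ⟨j, hjF, hj⟩ := exists_lt_card_notMem_image (fun i => (α i - m) / D) hi₀
    ((hbucket i₀ _).2 (by rw [mul_comm]; omega))
  have hj0 : j ≠ 0 := by
    rintro rfl
    exact hj (mem_image.2 ⟨i₁, hi₁, by simp [m]⟩)
  have hjD : j * D ≤ D * #F := by rw [mul_comm]; exact Nat.mul_le_mul_left D hjF.le
  refine ⟨m + j * D, by have := Nat.mul_le_mul_right D (Nat.one_le_iff_ne_zero.2 hj0); omega,
    by omega, fun i hi hti => ?_⟩
  have hne : (α i - m) / D ≠ j := fun h => hj (mem_image.2 ⟨i, hi, h⟩)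
  have hge : j + 1 ≤ (α i - m) / D := lt_of_le_of_ne ((hbucket i j).2 (by omega)) hne.symm
  have := (hbucket i _).1 hge
  rw [add_mul, one_mul] at this
  omega

theorem sum_mul_pow_eq_zero_of_gap {ι : Type*} {k : ℤ} (hk : 0 < k) {z : ι → ℤ} {α : ι → ℕ}
    {L H : Finset ι} {t D : ℕ} (hL : ∀ i ∈ L, α i ≤ t) (hH : ∀ i ∈ H, t + D ≤ α i)
    (hB : ∑ i ∈ L, |z i| < k ^ D)
    (hsum : ∑ i ∈ L, z i * k ^ α i + ∑ i ∈ H, z i * k ^ α i = 0) :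
    ∑ i ∈ L, z i * k ^ α i = 0 := by
  have hdvd : k ^ (t + D) ∣ ∑ i ∈ L, z i * k ^ α i := by
    rw [eq_neg_of_add_eq_zero_left hsum]
    exact (dvd_sum fun i hi => (pow_dvd_pow k (hH i hi)).mul_left _).neg_right
  refine Int.eq_zero_of_abs_lt_dvd hdvd ?_
  calc |∑ i ∈ L, z i * k ^ α i| ≤ ∑ i ∈ L, |z i| * k ^ t := by
        refine (abs_sum_le_sum_abs _ _).trans (sum_le_sum fun i hi => ?_)
        rw [abs_mul, abs_pow, abs_of_pos hk]
        exact mul_le_mul_of_nonneg_left (pow_le_pow_right₀ hk (hL i hi)) (abs_nonneg _)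
    _ = (∑ i ∈ L, |z i|) * k ^ t := (sum_mul ..).symm
    _ < k ^ D * k ^ t := mul_lt_mul_of_pos_right hB (pow_pos hk t)
    _ = k ^ (t + D) := by rw [pow_add, mul_comm]

theorem exists_finpartition_clustered_sum_mul_pow_eq_zero {ι : Type*} [DecidableEq ι] {k : ℤ}
    (hk : 0 < k) (z : ι → ℤ) (α : ι → ℕ) {D : ℕ} (hD : 0 < D) (F : Finset ι)
    (hB : ∑ i ∈ F, |z i| < k ^ D) (hF : ∑ i ∈ F, z i * k ^ α i = 0) :
    ∃ P : Finpartition F, ∀ p ∈ P.parts,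
      ∑ i ∈ p, z i * k ^ α i = 0 ∧ ∃ γ, ∀ i ∈ p, γ ≤ α i ∧ α i < γ + D * #p := by
  induction F using Finset.strongInduction with
  | H F ih =>
  rcases F.eq_empty_or_nonempty with rfl | hne
  · exact ⟨⊥, by simp⟩
  obtain ⟨i₁, hi₁, hmin⟩ := F.exists_min_image α hne
  by_cases hwin : ∀ i ∈ F, α i < α i₁ + D * #F
  · refine ⟨Finpartition.indiscrete hne.ne_empty, fun p hp => ?_⟩
    obtain rfl : p = F := by simpa using hp
    exact ⟨hF, α i₁, fun i hi => ⟨hmin i hi, hwin i hi⟩⟩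
  push Not at hwin
  obtain ⟨i₀, hi₀, hspread⟩ := hwin
  obtain ⟨t, h₁t, ht₀, hgap⟩ := exists_exponent_gap α hD hi₁ hi₀ hspread
  set L := F.filter (α · < t)
  set H := F.filter fun i => ¬α i < t
  have hL : L.Nonempty := ⟨i₁, mem_filter.2 ⟨hi₁, h₁t⟩⟩
  have hH : H.Nonempty := ⟨i₀, mem_filter.2 ⟨hi₀, not_lt.2 ht₀⟩⟩
  have hBsub {G : Finset ι} (hG : G ⊆ F) : ∑ i ∈ G, |z i| < k ^ D :=
    (sum_le_sum_of_subset_of_nonneg hG fun _ _ _ => abs_nonneg _).trans_lt hB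
  have hsplit : ∑ i ∈ L, z i * k ^ α i + ∑ i ∈ H, z i * k ^ α i = 0 := by
    rwa [sum_filter_add_sum_filter_not]
  have hLzero : ∑ i ∈ L, z i * k ^ α i = 0 :=
    sum_mul_pow_eq_zero_of_gap hk (fun i hi => (mem_filter.1 hi).2.le)
      (fun i hi => hgap i (mem_filter.1 hi).1 (not_lt.1 (mem_filter.1 hi).2))
      (hBsub (filter_subset _ _)) hsplit
  have hHzero : ∑ i ∈ H, z i * k ^ α i = 0 := by rwa [hLzero, zero_add] at hsplit
  let Q : Finpartition F := (Finpartition.indiscrete hL.ne_empty).extend hH.ne_empty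
    (disjoint_filter_filter_not F F _) (filter_union_filter_not_eq _ F)
  refine Q.exists_forall_of_parts fun q hq => ?_
  obtain rfl | rfl : q = H ∨ q = L := by simpa [Q] using hq
  · exact ih _ (filter_ssubset.2 ⟨i₁, hi₁, not_not.2 h₁t⟩) (hBsub (filter_subset _ _)) hHzero
  · exact ih _ (filter_ssubset.2 ⟨i₀, hi₀, not_lt.2 ht₀⟩) (hBsub (filter_subset _ _)) hLzero

/-- vanishing sums `Σ x_i k^{α_i} = 0` split into vanishing subsums
with exponents clustered within a window `C` depending only on `x₁,…,x_r`. -/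
theorem stmt17 (k : ℕ) (hk : 2 ≤ k) (r : ℕ) (x : ℕ → ℚ) :
    ∃ C : ℕ, ∀ α : ℕ → ℕ,
      (∑ i ∈ Finset.Icc 1 r, x i * (k : ℚ) ^ α i) = 0 →
      ∃ (s : ℕ) (I : ℕ → Finset ℕ) (γ : ℕ → ℕ),
        (∀ j ∈ Finset.Icc 1 s, (I j).Nonempty) ∧
        (∀ j₁ ∈ Finset.Icc 1 s, ∀ j₂ ∈ Finset.Icc 1 s, j₁ ≠ j₂ → Disjoint (I j₁) (I j₂)) ∧
        (Finset.Icc 1 s).biUnion I = Finset.Icc 1 r ∧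
        (∀ j ∈ Finset.Icc 1 s, ∑ i ∈ I j, x i * (k : ℚ) ^ α i = 0) ∧
        (∀ j ∈ Finset.Icc 1 s, ∀ i ∈ I j, |(γ j : ℤ) - (α i : ℤ)| < (C : ℤ)) := by
  obtain ⟨q, z, hq, hz⟩ := Rat.exist_integer_multiples (Icc 1 r) x
  have hzero_iff (α : ℕ → ℕ) {p : Finset ℕ} (hp : p ⊆ Icc 1 r) :
      ∑ i ∈ p, z i * (k : ℤ) ^ α i = 0 ↔ ∑ i ∈ p, x i * (k : ℚ) ^ α i = 0 := by
    have hcast : ((∑ i ∈ p, z i * (k : ℤ) ^ α i : ℤ) : ℚ) = q * ∑ i ∈ p, x i * (k : ℚ) ^ α i := by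
      push_cast
      rw [mul_sum]
      exact sum_congr rfl fun i hi => by rw [hz i (hp hi)]; ring
    rw [← Int.cast_eq_zero (α := ℚ), hcast, mul_eq_zero, or_iff_right (by exact_mod_cast hq)]
  have hk₁ : (1 : ℤ) < k := by exact_mod_cast hk
  obtain ⟨D, hD⟩ := pow_unbounded_of_one_lt (∑ i ∈ Icc 1 r, |z i|) hk₁
  refine ⟨(D + 1) * r, fun α hα => ?_⟩
  obtain ⟨P, hP⟩ := exists_finpartition_clustered_sum_mul_pow_eq_zero (by omega) z α
    (D := D + 1) (by omega) (Icc 1 r) (hD.trans_le (pow_le_pow_right₀ hk₁.le D.le_succ))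
    ((hzero_iff α subset_rfl).2 hα)
  choose! γ hγ using fun p hp => (hP p hp).2
  obtain ⟨I, hI⟩ := P.parts.exists_bijOn_Icc
  have hImaps := hI.mapsTo
  refine ⟨#P.parts, I, γ ∘ I, fun j hj => P.nonempty_of_mem_parts (hImaps hj),
    fun j₁ h₁ j₂ h₂ hne => P.disjoint (hImaps h₁) (hImaps h₂) (hI.injOn.ne h₁ h₂ hne),
    P.biUnion_eq_of_bijOn hI, fun j hj => (hzero_iff α (P.le (hImaps hj))).1 (hP _ (hImaps hj)).1,
    fun j hj i hi => ?_⟩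
  obtain ⟨hγα, hαγ⟩ := hγ _ (hImaps hj) i hi
  have hcard : #(I j) ≤ r := by simpa using card_le_card (P.le (hImaps hj))
  have hpos : 0 < (D + 1) * #(I j) := by
    have := (P.nonempty_of_mem_parts (hImaps hj)).card_pos
    positivity
  have := Nat.mul_le_mul_left (D + 1) hcard
  simp only [Function.comp_apply, abs_lt]
  omega

end MultAuto
end

section
/- Let k ≥ 2 be an integer and let A be a restricted generalised geometric progression of rank ≤ r in base k, A = { x₀ + Σ_{i=1}^r x_i k^{α_i} : α₁ ∈ F₁, α₂ ∈ F₂(α₁), …, α_r ∈ F_r(α₁,…,α_{r−1}) }. If the admissible parameter tuples (α₁,…,α_r) are coloured with finitely many colours (equivalently, if A is covered by finitely many sets in a way assigning a class to each admissible tuple), then there exist restriction maps F′₁, F′₂(·), …, F′_r(·), with each F′_i(α₁,…,α_{i−1}) an infinite subset of F_i(α₁,…,α_{i−1}), such that all admissible tuples of the restricted system receive the same colour; in particular, restricted generalised geometric progressions of rank ≤ r with fixed coefficients x₀,…,x_r are partition regular. -/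
open scoped BigOperators

namespace MultAuto

/-!
Induction on `r`. For every prefix `(α₁, …, α_r)`, pigeonhole yields an infinite part of
`F_{r+1}(α₁, …, α_r)` on which the colour of `(α₁, …, α_r, α_{r+1})` is constant; that constant
is a finite colouring of the prefixes, and the induction hypothesis makes it monochromatic.
-/

theorem _root_.Set.Infinite.exists_infinite_fiber {α κ : Type*} [Finite κ] {S : Set α}
    (hS : S.Infinite) (f : α → κ) : ∃ c, {n | n ∈ S ∧ f n = c}.Infinite := by
  by_contra! h
  refine hS (Set.Finite.subset (Set.finite_iUnion h) fun n hn => ?_)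
  exact Set.mem_iUnion.2 ⟨f n, hn, rfl⟩

theorem exists_restriction_monochromatic_in_coord {κ : Type*} [Finite κ] (s : Set ℕ) (m : ℕ)
    (S : (ℕ → ℕ) → Set ℕ) (hS : DependsOn S s) (hinf : ∀ α, (S α).Infinite)
    (col : (ℕ → ℕ) → κ) (hcol : DependsOn col (insert m s)) :
    ∃ (S' : (ℕ → ℕ) → Set ℕ) (c : (ℕ → ℕ) → κ), DependsOn S' s ∧ DependsOn c s ∧
      (∀ α, S' α ⊆ S α ∧ (S' α).Infinite) ∧ ∀ α, α m ∈ S' α → col α = c α := by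
  classical
  -- All choices are made at the representative `T α` of `α`, so they depend only on `s`.
  set T : (ℕ → ℕ) → (ℕ → ℕ) := fun α => s.piecewise α 0
  have hT : ∀ α, ∀ j ∈ s, T α j = α j := fun α j hj => s.piecewise_eq_of_mem _ _ hj
  have hTdep : DependsOn T s := fun α β h => funext fun j => by
    by_cases hj : j ∈ s
    · rw [hT α j hj, hT β j hj, h j hj]
    · simp only [T, Set.piecewise_eq_of_notMem _ _ _ hj]
  choose c₀ hc₀ using fun γ =>
    (hinf γ).exists_infinite_fiber fun n => col (Function.update γ m n)
  set fiber : (ℕ → ℕ) → Set ℕ := fun γ => {n | n ∈ S γ ∧ col (Function.update γ m n) = c₀ γ}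
  refine ⟨fiber ∘ T, c₀ ∘ T, fun _ _ h => congrArg fiber (hTdep h),
    fun _ _ h => congrArg c₀ (hTdep h), fun α => ⟨fun n hn => ?_, hc₀ (T α)⟩, fun α hα => ?_⟩
  · rw [← hS fun j hj => hT α j hj]
    exact hn.1
  · show col α = c₀ (T α)
    rw [← hα.2]
    refine hcol fun j hj => ?_
    by_cases hjm : j = m
    · simp [hjm]
    · rw [Function.update_of_ne hjm, hT α j ((Set.mem_insert_iff.1 hj).resolve_left hjm)]

theorem exists_monochromatic_restriction {κ : Type*} [Finite κ] (r : ℕ)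
    (F : ℕ → (ℕ → ℕ) → Set ℕ) (hdep : ∀ i ∈ Set.Icc 1 r, DependsOn (F i) (Set.Ico 1 i))
    (hinf : ∀ i ∈ Set.Icc 1 r, ∀ α, (F i α).Infinite)
    (col : (ℕ → ℕ) → κ) (hcol : DependsOn col (Set.Icc 1 r)) :
    ∃ F' : ℕ → (ℕ → ℕ) → Set ℕ,
      (∀ i ∈ Set.Icc 1 r, ∀ α, F' i α ⊆ F i α ∧ (F' i α).Infinite) ∧
      (∀ i ∈ Set.Icc 1 r, DependsOn (F' i) (Set.Ico 1 i)) ∧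
      ∃ c₀ : κ, ∀ α, (∀ i ∈ Set.Icc 1 r, α i ∈ F' i α) → col α = c₀ := by
  induction r generalizing col with
  | zero => exact ⟨F, fun i hi => by simp at hi, fun i hi => by simp at hi,
      col 0, fun α _ => hcol fun i hi => by simp at hi⟩
  | succ r ih =>
    have hlast : r + 1 ∈ Set.Icc 1 (r + 1) := ⟨Nat.le_add_left 1 r, le_rfl⟩
    have hlower : ∀ i ∈ Set.Icc 1 r, i ∈ Set.Icc 1 (r + 1) :=
      fun i hi => ⟨hi.1, hi.2.trans r.le_succ⟩
    have hlower_of_ne : ∀ i ∈ Set.Icc 1 (r + 1), i ≠ r + 1 → i ∈ Set.Icc 1 r :=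
      fun i hi hne => ⟨hi.1, Nat.le_of_lt_succ (hi.2.lt_of_ne hne)⟩
    obtain ⟨S', c, hS'dep, hcdep, hS', hcolS'⟩ := exists_restriction_monochromatic_in_coord
      (Set.Icc 1 r) (r + 1) (F (r + 1))
      (by simpa [Set.Ico_add_one_right_eq_Icc] using hdep (r + 1) hlast)
      (hinf (r + 1) hlast) col
      (hcol.mono fun j hj => (eq_or_ne j (r + 1)).imp id (hlower_of_ne j hj))
    obtain ⟨F'', hF'', hF''dep, c₀, hc₀⟩ := ih (fun i hi => hdep i (hlower i hi))
      (fun i hi => hinf i (hlower i hi)) c hcdep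
    refine ⟨Function.update F'' (r + 1) S', fun i hi => ?_, fun i hi => ?_, c₀, fun α hα => ?_⟩
    · rcases eq_or_ne i (r + 1) with rfl | hne
      · simpa using hS'
      · simpa [Function.update_of_ne hne] using hF'' i (hlower_of_ne i hi hne)
    · rcases eq_or_ne i (r + 1) with rfl | hne
      · simpa [Set.Ico_add_one_right_eq_Icc] using hS'dep
      · simpa [Function.update_of_ne hne] using hF''dep i (hlower_of_ne i hi hne)
    · rw [hcolS' α (by simpa using hα (r + 1) hlast)]
      refine hc₀ α fun i hi => ?_
      have hne : i ≠ r + 1 := (Nat.lt_succ_of_le hi.2).ne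
      simpa [Function.update_of_ne hne] using hα i (hlower i hi)

theorem stmt18_general (r : ℕ)
    (F : ℕ → (ℕ → ℕ) → Set ℕ)
    (hdep : ∀ i ∈ Finset.Icc 1 r, ∀ α β : ℕ → ℕ,
      (∀ j, 1 ≤ j → j < i → α j = β j) → F i α = F i β)
    (hinf : ∀ i ∈ Finset.Icc 1 r, ∀ α : ℕ → ℕ, (F i α).Infinite)
    (κ : Type) [Finite κ] (col : (ℕ → ℕ) → κ)
    (hcol : ∀ α β : ℕ → ℕ, (∀ i ∈ Finset.Icc 1 r, α i = β i) → col α = col β) :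
    ∃ F' : ℕ → (ℕ → ℕ) → Set ℕ,
      (∀ i ∈ Finset.Icc 1 r, ∀ α : ℕ → ℕ, F' i α ⊆ F i α ∧ (F' i α).Infinite) ∧
      (∀ i ∈ Finset.Icc 1 r, ∀ α β : ℕ → ℕ,
        (∀ j, 1 ≤ j → j < i → α j = β j) → F' i α = F' i β) ∧
      ∃ c₀ : κ, ∀ α : ℕ → ℕ, (∀ i ∈ Finset.Icc 1 r, α i ∈ F' i α) → col α = c₀ := by
  obtain ⟨F', hF', hF'dep, c₀, hc₀⟩ := exists_monochromatic_restriction r F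
    (fun i hi α β h => hdep i (Finset.mem_Icc.2 hi) α β fun j h1 h2 => h j ⟨h1, h2⟩)
    (fun i hi => hinf i (Finset.mem_Icc.2 hi)) col
    (fun α β h => hcol α β fun i hi => h i (Finset.mem_Icc.1 hi))
  refine ⟨F', fun i hi => hF' i (Finset.mem_Icc.1 hi), fun i hi α β h => ?_, c₀, fun α hα => ?_⟩
  · exact hF'dep i (Finset.mem_Icc.1 hi) fun j hj => h j hj.1 hj.2
  · exact hc₀ α fun i hi => hα i (Finset.mem_Icc.2 hi)

/-- partition regularity of restricted generalised geometric progressions: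
any finite colouring of the admissible tuples can be made monochromatic by shrinking
the restriction maps to infinite subsets. -/
theorem stmt18 (k : ℕ) (hk : 2 ≤ k) (r : ℕ) (x : ℕ → ℚ)
    (F : ℕ → (ℕ → ℕ) → Set ℕ)
    (hdep : ∀ i ∈ Finset.Icc 1 r, ∀ α β : ℕ → ℕ,
      (∀ j, 1 ≤ j → j < i → α j = β j) → F i α = F i β)
    (hinf : ∀ i ∈ Finset.Icc 1 r, ∀ α : ℕ → ℕ, (F i α).Infinite)
    (κ : Type) [Finite κ] (col : (ℕ → ℕ) → κ)
    (hcol : ∀ α β : ℕ → ℕ, (∀ i ∈ Finset.Icc 1 r, α i = β i) → col α = col β) :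
    ∃ F' : ℕ → (ℕ → ℕ) → Set ℕ,
      (∀ i ∈ Finset.Icc 1 r, ∀ α : ℕ → ℕ, F' i α ⊆ F i α ∧ (F' i α).Infinite) ∧
      (∀ i ∈ Finset.Icc 1 r, ∀ α β : ℕ → ℕ,
        (∀ j, 1 ≤ j → j < i → α j = β j) → F' i α = F' i β) ∧
      ∃ c₀ : κ, ∀ α : ℕ → ℕ, (∀ i ∈ Finset.Icc 1 r, α i ∈ F' i α) → col α = c₀ :=
  stmt18_general r F hdep hinf κ col hcol

end MultAuto
end
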